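/- arXiv:2407.07584 — 6 statements merged into one kernel-verified Lean document; each statement's English description precedes it below -/
import Mathlib

section
/- ε-bisimilarity is additive in the tolerances: if s ∼_{ε₁} t and t ∼_{ε₂} u (i.e., there are an ε₁-bisimulation containing (s,t) and an ε₂-bisimulation containing (t,u)), then s ∼_{ε'} u for some ε' with 0 ≤ ε' ≤ min{1, ε₁ + ε₂}; in fact the relational composition (suitably closed under reflexivity and symmetry) of an ε₁-bisimulation and an ε₂-bisimulation is contained in an (ε₁+ε₂)-bisimulation. -/
open scoped BigOperators

attribute [local instance] Classical.propDecidable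

/-- Mass that a (sub)distribution `μ` assigns to a set `A`. -/
noncomputable def pmass {S : Type*} (μ : S → ℝ) (A : Set S) : ℝ := ∑' a : A, μ a

/-- L1-distance between two functions `S → ℝ`. -/
noncomputable def l1dist {S : Type*} (μ ν : S → ℝ) : ℝ := ∑' s, |μ s - ν s|

/-- `μ : S → ℝ` is a probability distribution. -/
def IsDistr {S : Type*} (μ : S → ℝ) : Prop :=
  (∀ s, 0 ≤ μ s) ∧ (∀ s, μ s ≤ 1) ∧ HasSum μ 1

/-- Image of a set under a relation. -/
def relImg {S : Type*} (R : S → S → Prop) (A : Set S) : Set S := {t | ∃ s ∈ A, R s t}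

/-- ε-bisimulation on a labeled Markov chain with transition function `P` and labeling `lab`. -/
def IsEpsBisim {S L : Type*} (P : S → S → ℝ) (lab : S → L) (ε : ℝ)
    (R : S → S → Prop) : Prop :=
  Reflexive R ∧ Symmetric R ∧
    ∀ s t, R s t → lab s = lab t ∧
      ∀ A : Set S, pmass (P s) A ≤ pmass (P t) (relImg R A) + ε

/-- ε-APB (approximate probabilistic bisimulation with precision ε). -/
def IsEpsAPB {S L : Type*} (P : S → S → ℝ) (lab : S → L) (ε : ℝ)
    (R : S → S → Prop) : Prop :=
  Reflexive R ∧ Symmetric R ∧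
    ∀ s t, R s t → lab s = lab t ∧
      ∀ A : Set S, relImg R A ⊆ A → |pmass (P s) A - pmass (P t) A| ≤ ε

/-- Weight of a finite path witnessing `B U A` starting at `s` and continuing along the list. -/
noncomputable def untilWeight {S : Type*} (P : S → S → ℝ) (B A : Set S) :
    S → List S → ℝ
  | s, [] => if s ∈ A then 1 else 0
  | s, t :: rest =>
      if s ∈ A then 0 else if s ∈ B then P s t * untilWeight P B A t rest else 0

/-- `Pr_s(B U A)`: probability of reaching `A` from `s` via states in `B`. -/
noncomputable def untilProb {S : Type*} (P : S → S → ℝ) (B A : Set S) (s : S) : ℝ :=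
  ∑' l : List S, untilWeight P B A s l

/-- `Pr_s(□C)`: probability of staying in `C` forever, `= 1 - Pr_s(C U Cᶜ)`. -/
noncomputable def boxProb {S : Type*} (P : S → S → ℝ) (C : Set S) (s : S) : ℝ :=
  1 - untilProb P C Cᶜ s

/-- Weak ε-bisimulation. -/
def IsWeakEpsBisim {S L : Type*} (P : S → S → ℝ) (lab : S → L) (ε : ℝ)
    (R : S → S → Prop) : Prop :=
  Reflexive R ∧ Symmetric R ∧
    ∀ s t, R s t → lab s = lab t ∧
      ∀ A : Set S, untilProb P {u | lab u = lab s} A s ≤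
        untilProb P {u | lab u = lab t} (relImg R A) t + ε

/-- Weak ε-bisimilarity of two states. -/
def WeakEpsBisimilar {S L : Type*} (P : S → S → ℝ) (lab : S → L) (ε : ℝ)
    (s t : S) : Prop :=
  ∃ R, IsWeakEpsBisim P lab ε R ∧ R s t

/-- Up-to-(n,ε)-bisimilarity. -/
def upTo {S L : Type*} (P : S → S → ℝ) (lab : S → L) (ε : ℝ) :
    ℕ → S → S → Prop
  | 0, _, _ => True
  | n + 1, s, t => lab s = lab t ∧
      ∀ A : Set S,
        pmass (P s) A ≤ pmass (P t) (relImg (upTo P lab ε n) A) + ε ∧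
        pmass (P t) A ≤ pmass (P s) (relImg (upTo P lab ε n) A) + ε

/-- Branching ε-bisimulation. -/
def IsBranchingEpsBisim {S L : Type*} (P : S → S → ℝ) (lab : S → L) (ε : ℝ)
    (R : S → S → Prop) : Prop :=
  Equivalence R ∧
    ∀ s t, R s t → lab s = lab t ∧
      ∀ A : Set S, relImg R A ⊆ A →
        |untilProb P {u | R s u} A s - untilProb P {u | R t u} A t| ≤ ε

/-- Transitive ε-bisimulation (equivalently, an ε-APB which is an equivalence). -/
def IsTransEpsBisim {S L : Type*} (P : S → S → ℝ) (lab : S → L) (ε : ℝ)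
    (R : S → S → Prop) : Prop :=
  Equivalence R ∧
    ∀ s t, R s t → lab s = lab t ∧
      ∀ A : Set S, relImg R A ⊆ A → |pmass (P s) A - pmass (P t) A| ≤ ε

/-- Exact probabilistic bisimulation. -/
def IsExactBisim {S L : Type*} (P : S → S → ℝ) (lab : S → L)
    (R : S → S → Prop) : Prop :=
  Equivalence R ∧
    ∀ s t, R s t → lab s = lab t ∧
      ∀ c, pmass (P s) {u | R c u} = pmass (P t) {u | R c u}

/-- `Pr_s(◇^{≤k} G)`: probability of reaching `G` from `s` within `k` steps. -/
noncomputable def reachLe {S : Type*} (P : S → S → ℝ) (G : Set S) :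
    ℕ → S → ℝ
  | 0, s => if s ∈ G then 1 else 0
  | k + 1, s => if s ∈ G then 1 else ∑' t, P s t * reachLe P G k t

/-!
Compose the two relations and close the result under symmetry. If `p R₁ a R₂ q`, then for every
`A` the `ε₁`-bisimulation moves the mass of `A` at `p` onto `R₁(A)` at `a` up to `ε₁`, and the
`ε₂`-bisimulation moves that onto `R₂(R₁(A))` at `q` up to `ε₂`; the tolerances add. Bringing the
tolerance down to `min 1 (ε₁ + ε₂)` is free because masses of a distribution lie in `[0, 1]`.
-/

open Relation

section pmass

variable {S : Type*} {μ : S → ℝ}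

lemma pmass_empty : pmass μ ∅ = 0 := by
  simp [pmass]

lemma pmass_nonneg (h0 : ∀ s, 0 ≤ μ s) (A : Set S) : 0 ≤ pmass μ A :=
  tsum_nonneg fun a => h0 a

lemma pmass_mono (hs : Summable μ) (h0 : ∀ s, 0 ≤ μ s) {A B : Set S} (hAB : A ⊆ B) :
    pmass μ A ≤ pmass μ B :=
  (hs.subtype A).tsum_le_tsum_of_inj (Set.inclusion hAB) (Set.inclusion_injective hAB)
    (fun b _ => h0 b) (fun _ => le_rfl) (hs.subtype B)

lemma IsDistr.pmass_le_one (hμ : IsDistr μ) (A : Set S) : pmass μ A ≤ 1 :=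
  (hμ.2.2.summable.tsum_subtype_le μ A hμ.1).trans_eq hμ.2.2.tsum_eq

end pmass

lemma relImg_relImg {S : Type*} (R₁ R₂ : S → S → Prop) (A : Set S) :
    relImg R₂ (relImg R₁ A) = relImg (Comp R₁ R₂) A := by
  ext z
  constructor
  · rintro ⟨y, ⟨x, hx, hxy⟩, hyz⟩
    exact ⟨x, hx, y, hxy, hyz⟩
  · rintro ⟨x, hx, y, hxy, hyz⟩
    exact ⟨y, ⟨x, hx, hxy⟩, hyz⟩

lemma relImg_mono {S : Type*} {R R' : S → S → Prop} (h : ∀ p q, R p q → R' p q) (A : Set S) :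
    relImg R A ⊆ relImg R' A := by
  rintro z ⟨x, hx, hxz⟩
  exact ⟨x, hx, h x z hxz⟩

lemma comp_swap_of_symmetric {S : Type*} {R₁ R₂ : S → S → Prop} (h₁ : Symmetric R₁)
    (h₂ : Symmetric R₂) {p q : S} (h : Comp R₁ R₂ p q) : Comp R₂ R₁ q p :=
  let ⟨a, hpa, haq⟩ := h
  ⟨a, h₂ haq, h₁ hpa⟩

namespace IsEpsBisim

variable {S L : Type*} {P : S → S → ℝ} {lab : S → L} {ε ε₁ ε₂ : ℝ} {R R₁ R₂ : S → S → Prop}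

lemma nonneg (h : IsEpsBisim P lab ε R) (s : S) : 0 ≤ ε := by
  have h_empty := (h.2.2 s s (h.1 s)).2 ∅
  have h_img : relImg R ∅ = ∅ := by simp [relImg]
  rwa [h_img, pmass_empty, zero_add] at h_empty

lemma comp_transfer (hP : ∀ s, IsDistr (P s)) (h₁ : IsEpsBisim P lab ε₁ R₁)
    (h₂ : IsEpsBisim P lab ε₂ R₂) (hR : ∀ p q, Comp R₁ R₂ p q → R p q)
    {p q : S} (hpq : Comp R₁ R₂ p q) :
    lab p = lab q ∧ ∀ A : Set S, pmass (P p) A ≤ pmass (P q) (relImg R A) + (ε₁ + ε₂) := by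
  obtain ⟨a, hpa, haq⟩ := hpq
  obtain ⟨hlab₁, hmass₁⟩ := h₁.2.2 p a hpa
  obtain ⟨hlab₂, hmass₂⟩ := h₂.2.2 a q haq
  refine ⟨hlab₁.trans hlab₂, fun A => ?_⟩
  have h_sub : relImg R₂ (relImg R₁ A) ⊆ relImg R A :=
    relImg_relImg R₁ R₂ A ▸ relImg_mono hR A
  calc pmass (P p) A ≤ pmass (P a) (relImg R₁ A) + ε₁ := hmass₁ A
    _ ≤ pmass (P q) (relImg R₂ (relImg R₁ A)) + ε₂ + ε₁ := by gcongr; exact hmass₂ _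
    _ ≤ pmass (P q) (relImg R A) + (ε₁ + ε₂) := by
      have := pmass_mono (hP q).2.2.summable (hP q).1 h_sub
      linarith

lemma symmGen_comp (hP : ∀ s, IsDistr (P s)) (h₁ : IsEpsBisim P lab ε₁ R₁)
    (h₂ : IsEpsBisim P lab ε₂ R₂) : IsEpsBisim P lab (ε₁ + ε₂) (SymmGen (Comp R₁ R₂)) := by
  refine ⟨fun p => .inl ⟨p, h₁.1 p, h₂.1 p⟩, fun p q => SymmGen.symm, ?_⟩
  rintro p q (hpq | hqp)
  · exact comp_transfer hP h₁ h₂ (fun _ _ => .inl) hpq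
  · rw [add_comm]
    refine comp_transfer hP h₂ h₁ (fun _ _ h => .inr ?_) (comp_swap_of_symmetric h₁.2.1 h₂.2.1 hqp)
    exact comp_swap_of_symmetric h₂.2.1 h₁.2.1 h

lemma min_one (hP : ∀ s, IsDistr (P s)) (h : IsEpsBisim P lab ε R) :
    IsEpsBisim P lab (min 1 ε) R := by
  refine ⟨h.1, h.2.1, fun s t hst => ⟨(h.2.2 s t hst).1, fun A => ?_⟩⟩
  rcases min_cases 1 ε with ⟨h_min, -⟩ | ⟨h_min, -⟩ <;> rw [h_min]
  · linarith [(hP s).pmass_le_one A, pmass_nonneg (hP t).1 (relImg R A)]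
  · exact (h.2.2 s t hst).2 A

end IsEpsBisim

theorem epsBisim_additive_general {S L : Type*}
    (P : S → S → ℝ) (lab : S → L)
    (hP : ∀ s, IsDistr (P s))
    (ε₁ ε₂ : ℝ)
    (R₁ R₂ : S → S → Prop)
    (h₁ : IsEpsBisim P lab ε₁ R₁) (h₂ : IsEpsBisim P lab ε₂ R₂)
    (s t u : S) (hst : R₁ s t) (htu : R₂ t u) :
    (∃ R₃ : S → S → Prop, IsEpsBisim P lab (ε₁ + ε₂) R₃ ∧
        ∀ p q : S, (∃ a, R₁ p a ∧ R₂ a q) → R₃ p q) ∧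
    (∃ ε' : ℝ, 0 ≤ ε' ∧ ε' ≤ min 1 (ε₁ + ε₂) ∧
        ∃ R : S → S → Prop, IsEpsBisim P lab ε' R ∧ R s u) := by
  have h₃ := h₁.symmGen_comp hP h₂
  have h_nonneg : 0 ≤ ε₁ + ε₂ := add_nonneg (h₁.nonneg s) (h₂.nonneg s)
  exact ⟨⟨_, h₃, fun _ _ => .inl⟩, min 1 (ε₁ + ε₂), le_min zero_le_one h_nonneg, le_rfl,
    _, h₃.min_one hP, .inl ⟨t, hst, htu⟩⟩

theorem epsBisim_additive {S L : Type*} [Countable S] [Nonempty S]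
    (P : S → S → ℝ) (lab : S → L)
    (hP : ∀ s, IsDistr (P s)) (hfb : ∀ s, (Function.support (P s)).Finite)
    (ε₁ ε₂ : ℝ) (hε₁ : 0 ≤ ε₁) (hε₁' : ε₁ ≤ 1) (hε₂ : 0 ≤ ε₂) (hε₂' : ε₂ ≤ 1)
    (R₁ R₂ : S → S → Prop)
    (h₁ : IsEpsBisim P lab ε₁ R₁) (h₂ : IsEpsBisim P lab ε₂ R₂)
    (s t u : S) (hst : R₁ s t) (htu : R₂ t u) :
    (∃ R₃ : S → S → Prop, IsEpsBisim P lab (ε₁ + ε₂) R₃ ∧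
        ∀ p q : S, (∃ a, R₁ p a ∧ R₂ a q) → R₃ p q) ∧
    (∃ ε' : ℝ, 0 ≤ ε' ∧ ε' ≤ min 1 (ε₁ + ε₂) ∧
        ∃ R : S → S → Prop, IsEpsBisim P lab ε' R ∧ R s u) :=
  epsBisim_additive_general P lab hP ε₁ ε₂ R₁ R₂ h₁ h₂ s t u hst htu
end

section
/- Let M be a finite LMC, ε ∈ [0,1), R a branching ε-bisimulation on M, and C an R-equivalence class. Then either Pr_s(□C) = 0 for all s ∈ C, or Pr_s(□C) ≥ 1 − ε for all s ∈ C. -/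
open scoped BigOperators

attribute [local instance] Classical.propDecidable

/-! The function `s ↦ Pr_s(□C)` vanishes outside `C` and on `C` equals the `P`-average of its
values. On a finite chain it attains a maximum `m` at some `t`; if `m > 0`, the maximum principle
makes the set of maximisers a subset of `C` closed under transitions, so a path from `t` never
leaves `C` and `Pr_t(□C) = 1`. As `Cᶜ` is `R`-closed, the bisimulation condition for `A = Cᶜ`
compares `Pr_s(C U Cᶜ)` with `Pr_t(C U Cᶜ) = 0`, giving `Pr_s(□C) ≥ 1 - ε` on all of `C`. -/

open Finset

section

variable {S : Type*} {P : S → S → ℝ} (B A : Set S)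

lemma untilWeight_cons_of_mem_diff {s : S} (hs : s ∈ B \ A) (t : S) (l : List S) :
    untilWeight P B A s (t :: l) = P s t * untilWeight P B A t l := by
  simp [untilWeight, hs.1, hs.2]

lemma untilWeight_nonneg (hP0 : ∀ s t, 0 ≤ P s t) (s : S) (l : List S) :
    0 ≤ untilWeight P B A s l := by
  induction l generalizing s with
  | nil => simp only [untilWeight]; split_ifs <;> norm_num
  | cons t l ih =>
    simp only [untilWeight]
    split_ifs
    exacts [le_rfl, mul_nonneg (hP0 s t) (ih t), le_rfl]

lemma untilWeight_cons_le (hP0 : ∀ s t, 0 ≤ P s t) {s : S} (hs : s ∉ A) (t : S)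
    (l : List S) : untilWeight P B A s (t :: l) ≤ P s t * untilWeight P B A t l := by
  by_cases hsB : s ∈ B
  · exact (untilWeight_cons_of_mem_diff B A ⟨hsB, hs⟩ t l).le
  · simpa [untilWeight, hs, hsB] using mul_nonneg (hP0 s t) (untilWeight_nonneg B A hP0 t l)

lemma sum_untilWeight_le_one_of_mem (hP0 : ∀ s t, 0 ≤ P s t) {s : S} (hs : s ∈ A)
    (u : Finset (List S)) : ∑ l ∈ u, untilWeight P B A s l ≤ 1 :=
  calc ∑ l ∈ u, untilWeight P B A s l
      ≤ ∑ l ∈ insert [] u, untilWeight P B A s l :=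
        sum_le_sum_of_subset_of_nonneg (subset_insert _ _)
          fun l _ _ => untilWeight_nonneg B A hP0 s l
    _ = untilWeight P B A s [] := by
        refine sum_eq_single_of_mem _ (mem_insert_self _ _) fun l _ hl => ?_
        obtain ⟨t, l, rfl⟩ := List.exists_cons_of_ne_nil hl
        simp [untilWeight, hs]
    _ = 1 := by simp [untilWeight, hs]

lemma sum_untilWeight_head_eq_le (hP0 : ∀ s t, 0 ≤ P s t) {s : S} (hs : s ∉ A) (t : S)
    (u : Finset (List S)) :
    ∑ l ∈ u with l.head? = some t, untilWeight P B A s l ≤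
      P s t * ∑ r ∈ (u.filter (·.head? = some t)).image List.tail, untilWeight P B A t r := by
  set v := u.filter (·.head? = some t)
  have hv : ∀ l ∈ v, l = t :: l.tail := fun l hl => by
    obtain ⟨r, hr⟩ := List.head?_eq_some_iff.1 (mem_filter.1 hl).2
    simp [hr]
  have htail : Set.InjOn List.tail (v : Set (List S)) := by
    intro l₁ h₁ l₂ h₂ h
    rw [hv l₁ h₁, hv l₂ h₂, h]
  rw [sum_image htail, mul_sum]
  exact sum_le_sum fun l hl => by
    rw [hv l hl]
    exact untilWeight_cons_le B A hP0 hs t _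

lemma sum_untilWeight_le_one [Fintype S] (hP : ∀ s, IsDistr (P s)) (u : Finset (List S))
    (s : S) : ∑ l ∈ u, untilWeight P B A s l ≤ 1 := by
  have hP0 : ∀ s t, 0 ≤ P s t := fun s => (hP s).1
  suffices ∀ n (u : Finset (List S)), (∀ l ∈ u, l.length < n) → ∀ s,
      ∑ l ∈ u, untilWeight P B A s l ≤ 1 from
    this _ u (fun l hl => Nat.lt_succ_of_le (le_sup (f := List.length) hl)) s
  intro n
  induction n with
  | zero =>
    intro u hu s
    simp [eq_empty_of_forall_notMem fun l hl => Nat.not_lt_zero _ (hu l hl)]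
  | succ n ih =>
    intro u hu s
    by_cases hsA : s ∈ A
    · exact sum_untilWeight_le_one_of_mem B A hP0 hsA u
    have hnil : ∑ l ∈ u with l.head? = none, untilWeight P B A s l = 0 :=
      sum_eq_zero fun l hl => by
        rw [List.head?_eq_none_iff.1 (mem_filter.1 hl).2]
        simp [untilWeight, hsA]
    have htails : ∀ t, ∀ r ∈ (u.filter (·.head? = some t)).image List.tail, r.length < n := by
      intro t r hr
      obtain ⟨l, hl, rfl⟩ := mem_image.1 hr
      obtain ⟨r, rfl⟩ := List.head?_eq_some_iff.1 (mem_filter.1 hl).2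
      simpa using hu _ (mem_filter.1 hl).1
    calc ∑ l ∈ u, untilWeight P B A s l
        = ∑ o : Option S, ∑ l ∈ u with l.head? = o, untilWeight P B A s l :=
          (sum_fiberwise u _ _).symm
      _ = ∑ t, ∑ l ∈ u with l.head? = some t, untilWeight P B A s l := by
          rw [Fintype.sum_option, hnil, zero_add]
      _ ≤ ∑ t, P s t * 1 := sum_le_sum fun t _ =>
          (sum_untilWeight_head_eq_le B A hP0 hsA t u).trans
            (mul_le_mul_of_nonneg_left (ih _ (htails t) t) (hP0 s t))
      _ = 1 := by rw [← sum_mul, (hasSum_fintype (P s)).unique (hP s).2.2, one_mul]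

lemma summable_untilWeight [Fintype S] (hP : ∀ s, IsDistr (P s)) (s : S) :
    Summable (untilWeight P B A s) :=
  summable_of_sum_le (fun l => untilWeight_nonneg B A (fun s => (hP s).1) s l)
    (sum_untilWeight_le_one B A hP · s)

lemma untilProb_le_one [Fintype S] (hP : ∀ s, IsDistr (P s)) (s : S) :
    untilProb P B A s ≤ 1 :=
  Real.tsum_le_of_sum_le (fun l => untilWeight_nonneg B A (fun s => (hP s).1) s l)
    (sum_untilWeight_le_one B A hP · s)

lemma untilProb_eq_one_of_mem {s : S} (hs : s ∈ A) : untilProb P B A s = 1 := by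
  rw [untilProb, tsum_eq_single []]
  · simp [untilWeight, hs]
  · rintro (_ | ⟨t, l⟩) hl
    · exact absurd rfl hl
    · simp [untilWeight, hs]

lemma untilProb_eq_sum [Fintype S] (hP : ∀ s, IsDistr (P s)) {s : S} (hs : s ∈ B \ A) :
    untilProb P B A s = ∑ t, P s t * untilProb P B A t := by
  set cons : S × List S → List S := fun p => p.1 :: p.2
  have hcons : Function.Injective cons := by
    rintro ⟨t, l⟩ ⟨t', l'⟩ h
    simp_all [cons]
  have hsupp : Function.support (untilWeight P B A s) ⊆ Set.range cons := by
    rintro (_ | ⟨t, l⟩) hl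
    · simp [untilWeight, hs.2] at hl
    · exact ⟨(t, l), rfl⟩
  calc untilProb P B A s
      = ∑' p : S × List S, untilWeight P B A s (p.1 :: p.2) := (hcons.tsum_eq hsupp).symm
    _ = ∑' t, ∑' l, untilWeight P B A s (t :: l) :=
        ((summable_untilWeight B A hP s).comp_injective hcons).tsum_prod'
          fun t => (summable_untilWeight B A hP s).comp_injective List.cons_injective
    _ = ∑ t, ∑' l, untilWeight P B A s (t :: l) := tsum_fintype _
    _ = ∑ t, P s t * untilProb P B A t := by
        simp only [untilWeight_cons_of_mem_diff B A hs, tsum_mul_left, untilProb]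

lemma untilProb_eq_zero_of_invariant {M : Set S} (hMA : Disjoint M A)
    (hM : ∀ t ∈ M, ∀ u, P t u ≠ 0 → u ∈ M) {s : S} (hs : s ∈ M) :
    untilProb P B A s = 0 := by
  suffices ∀ l s, s ∈ M → untilWeight P B A s l = 0 by simp [untilProb, this _ s hs]
  intro l
  induction l with
  | nil => intro s hs; simp [untilWeight, hMA.notMem_of_mem_left hs]
  | cons u l ih =>
    intro s hs
    by_cases hsu : P s u = 0
    · simp [untilWeight, hsu]
    · simp [untilWeight, ih u (hM s hs u hsu)]

lemma IsDistr.eq_of_sum_mul_eq_of_le [Fintype S] {μ : S → ℝ} (hμ : IsDistr μ) {f : S → ℝ}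
    {m : ℝ} (hf : ∀ u, f u ≤ m) (hsum : ∑ u, μ u * f u = m) {u : S} (hu : μ u ≠ 0) :
    f u = m := by
  have hμ1 : ∑ u, μ u = 1 := (hasSum_fintype μ).unique hμ.2.2
  have hgap : ∑ u, μ u * (m - f u) = 0 := by
    simp only [mul_sub, sum_sub_distrib, ← sum_mul, hμ1, one_mul, hsum, sub_self]
  have := (sum_eq_zero_iff_of_nonneg fun u _ => mul_nonneg (hμ.1 u) (sub_nonneg.2 (hf u))).1
    hgap u (mem_univ u)
  linarith [(mul_eq_zero.1 this).resolve_left hu]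

variable (C : Set S)

lemma boxProb_eq_zero_of_notMem {s : S} (hs : s ∉ C) : boxProb P C s = 0 := by
  rw [boxProb, untilProb_eq_one_of_mem C Cᶜ hs, sub_self]

lemma boxProb_nonneg [Fintype S] (hP : ∀ s, IsDistr (P s)) (s : S) : 0 ≤ boxProb P C s :=
  sub_nonneg.2 (untilProb_le_one C Cᶜ hP s)

lemma boxProb_eq_sum [Fintype S] (hP : ∀ s, IsDistr (P s)) {s : S} (hs : s ∈ C) :
    boxProb P C s = ∑ t, P s t * boxProb P C t := by
  simp only [boxProb, untilProb_eq_sum C Cᶜ hP ⟨hs, not_not_intro hs⟩, mul_sub, mul_one,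
    sum_sub_distrib, (hasSum_fintype (P s)).unique (hP s).2.2]

lemma exists_boxProb_eq_one [Fintype S] (hP : ∀ s, IsDistr (P s))
    (h : ∃ s, 0 < boxProb P C s) : ∃ t ∈ C, boxProb P C t = 1 := by
  obtain ⟨s, hs⟩ := h
  obtain ⟨t, -, ht⟩ := exists_max_image univ (boxProb P C) ⟨s, mem_univ s⟩
  set M := {u | boxProb P C u = boxProb P C t}
  have hMC : M ⊆ C := fun u hu => by
    by_contra huC
    have : boxProb P C t = 0 := hu.symm.trans (boxProb_eq_zero_of_notMem C huC)
    linarith [ht s (mem_univ s)]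
  have hM : ∀ v ∈ M, ∀ u, P v u ≠ 0 → u ∈ M := fun v hv u hvu =>
    (hP v).eq_of_sum_mul_eq_of_le (fun u => ht u (mem_univ u))
      ((boxProb_eq_sum C hP (hMC hv)).symm.trans hv) hvu
  have hU : untilProb P C Cᶜ t = 0 :=
    untilProb_eq_zero_of_invariant C Cᶜ (Set.disjoint_compl_right_iff_subset.2 hMC) hM rfl
  exact ⟨t, hMC rfl, by rw [boxProb, hU, sub_zero]⟩

lemma IsBranchingEpsBisim.abs_boxProb_sub_le {L : Type*} {lab : S → L} {ε : ℝ}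
    {R : S → S → Prop} (hR : IsBranchingEpsBisim P lab ε R) {c s t : S} (hs : R c s)
    (ht : R c t) : |boxProb P {u | R c u} s - boxProb P {u | R c u} t| ≤ ε := by
  have hclass : ∀ {v}, R c v → {u | R v u} = {u | R c u} := fun hv => Set.ext fun u =>
    ⟨hR.1.trans hv, hR.1.trans (hR.1.symm hv)⟩
  have hclosed : relImg R {u | R c u}ᶜ ⊆ {u | R c u}ᶜ := by
    rintro v ⟨w, hw, hwv⟩ hv
    exact hw (hR.1.trans hv (hR.1.symm hwv))
  have := (hR.2 s t (hR.1.trans (hR.1.symm hs) ht)).2 _ hclosed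
  rw [hclass hs, hclass ht, abs_sub_comm] at this
  simpa only [boxProb, sub_sub_sub_cancel_left] using this

end

theorem branching_box_dichotomy_general {S L : Type*} [Fintype S]
    (P : S → S → ℝ) (lab : S → L)
    (hP : ∀ s, IsDistr (P s)) (ε : ℝ)
    (R : S → S → Prop) (hR : IsBranchingEpsBisim P lab ε R) (c : S) :
    (∀ s, R c s → boxProb P {u | R c u} s = 0) ∨
    (∀ s, R c s → 1 - ε ≤ boxProb P {u | R c u} s) := by
  by_cases h : ∃ s, 0 < boxProb P {u | R c u} s
  · obtain ⟨t, ht, ht1⟩ := exists_boxProb_eq_one _ hP h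
    refine Or.inr fun s hs => ?_
    have := hR.abs_boxProb_sub_le hs ht
    rw [ht1] at this
    linarith [(abs_le.1 this).1]
  · simp only [not_exists, not_lt] at h
    exact Or.inl fun s _ => le_antisymm (h s) (boxProb_nonneg _ hP s)

theorem branching_box_dichotomy {S L : Type*} [Fintype S] [Nonempty S]
    (P : S → S → ℝ) (lab : S → L)
    (hP : ∀ s, IsDistr (P s)) (ε : ℝ) (hε0 : 0 ≤ ε) (hε1 : ε < 1)
    (R : S → S → Prop) (hR : IsBranchingEpsBisim P lab ε R) (c : S) :
    (∀ s, R c s → boxProb P {u | R c u} s = 0) ∨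
    (∀ s, R c s → 1 - ε ≤ boxProb P {u | R c u} s) :=
  branching_box_dichotomy_general P lab hP ε R hR c
end

section
/- If s ≈^w_ε t in an LMC and b = l(s) = l(t), then |Pr_s(□b) − Pr_t(□b)| ≤ ε, where Pr_s(□b) is the probability that the path from s only ever visits states labeled b. -/
open scoped BigOperators

attribute [local instance] Classical.propDecidable

/-! Weak ε-bisimulations respect labels, so the relational image of the set of states not labelled
`b` is that set itself. Taking `A = S ∖ L(b)` in the defining inequality, in both directions,
bounds the difference of the probabilities of leaving `b`-states by `ε`, and `Pr(□b)` is one minus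
that probability. -/

theorem relImg_eq_self {S : Type*} {R : S → S → Prop} {A : Set S} (hR : ∀ a, R a a)
    (hA : ∀ u v, R u v → u ∈ A → v ∈ A) : relImg R A = A :=
  Set.Subset.antisymm (fun _ ⟨u, hu, huv⟩ => hA u _ huv hu) fun v hv => ⟨v, hv, hR v⟩

namespace IsWeakEpsBisim

variable {S L : Type*} {P : S → S → ℝ} {lab : S → L} {ε : ℝ} {R : S → S → Prop}

theorem relImg_compl_labelClass (hR : IsWeakEpsBisim P lab ε R) (b : L) :
    relImg R {u | lab u = b}ᶜ = {u | lab u = b}ᶜ :=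
  relImg_eq_self hR.1 fun u v huv hu hv => hu ((hR.2.2 u v huv).1.trans hv)

theorem untilProb_leave_labelClass_le (hR : IsWeakEpsBisim P lab ε R) {s t : S} (hst : R s t)
    {b : L} (hs : lab s = b) (ht : lab t = b) :
    untilProb P {u | lab u = b} {u | lab u = b}ᶜ s ≤
      untilProb P {u | lab u = b} {u | lab u = b}ᶜ t + ε := by
  have h := (hR.2.2 s t hst).2 {u | lab u = b}ᶜ
  rwa [hs, ht, hR.relImg_compl_labelClass] at h

end IsWeakEpsBisim

theorem weak_box_bound_general {S L : Type*}
    (P : S → S → ℝ) (lab : S → L)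
    (ε : ℝ) (s t : S) (hst : WeakEpsBisimilar P lab ε s t)
    (b : L) (hbs : lab s = b) (hbt : lab t = b) :
    |boxProb P {u | lab u = b} s - boxProb P {u | lab u = b} t| ≤ ε := by
  obtain ⟨R, hR, hRst⟩ := hst
  have hleave_st := hR.untilProb_leave_labelClass_le hRst hbs hbt
  have hleave_ts := hR.untilProb_leave_labelClass_le (hR.2.1 hRst) hbt hbs
  rw [boxProb, boxProb, abs_le]
  constructor <;> linarith

theorem weak_box_bound {S L : Type*} [Countable S] [Nonempty S]
    (P : S → S → ℝ) (lab : S → L)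
    (hP : ∀ s, IsDistr (P s)) (hfb : ∀ s, (Function.support (P s)).Finite)
    (ε : ℝ) (s t : S) (hst : WeakEpsBisimilar P lab ε s t)
    (b : L) (hbs : lab s = b) (hbt : lab t = b) :
    |boxProb P {u | lab u = b} s - boxProb P {u | lab u = b} t| ≤ ε :=
  weak_box_bound_general P lab ε s t hst b hbs hbt
end

section
/- In an LMC with no stutter steps, i.e., P(s)(L(s)) = 0 for all s ∈ S, an equivalence R relating only equally labeled states is a branching ε-bisimulation if and only if it is a transitive ε-bisimulation (equivalently, an ε-APB that is an equivalence); consequently ∼^*_ε = ≈^b_ε. -/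
open scoped BigOperators

attribute [local instance] Classical.propDecidable

/-!
Without stutter steps a state cannot move inside its own `R`-class, so `Pr_s([s]_R U A)` collapses
to `P(s)(A)` when `s ∉ A`, and is `1` when `s ∈ A`. Hence the branching and the APB conditions agree
on `R`-closed sets avoiding `[s]_R`; for a general `R`-closed `A`, the APB inequality follows from
the branching one for `A \ [s]_R`, which changes neither `P(s)(A)` nor `P(t)(A)`.
-/

section

variable {S : Type*}

lemma eq_zero_of_pmass_eq_zero {μ : S → ℝ} {A : Set S} (hμ0 : ∀ x, 0 ≤ μ x)
    (hμ : Summable μ) (hA : pmass μ A = 0) {a : S} (ha : a ∈ A) : μ a = 0 := by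
  have hsum : HasSum (fun x : A => μ x) 0 := hA ▸ (hμ.subtype A).hasSum
  exact congrFun ((hasSum_zero_iff_of_nonneg (f := fun x : A => μ x) fun x => hμ0 x).1 hsum) ⟨a, ha⟩

lemma pmass_diff_of_eq_zero {μ : S → ℝ} {C : Set S} (hC : ∀ a ∈ C, μ a = 0) (A : Set S) :
    pmass μ (A \ C) = pmass μ A := by
  simp only [pmass, tsum_subtype]
  congr 1 with x
  by_cases hxC : x ∈ C <;> by_cases hxA : x ∈ A <;> simp [hxA, hxC, hC]

lemma untilProb_of_mem (P : S → S → ℝ) (B : Set S) {A : Set S} {s : S} (hs : s ∈ A) :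
    untilProb P B A s = 1 := by
  rw [untilProb, tsum_eq_single []]
  · simp [untilWeight, hs]
  · rintro (_ | ⟨t, rest⟩) hl
    · exact absurd rfl hl
    · simp [untilWeight, hs]

section NoInternalStep

variable {P : S → S → ℝ} {B A : Set S} {s : S}

/-- Paths of length at least two contribute nothing: their second state is in `B`, which
`s` cannot step to, or it ends the path early. -/
lemma untilWeight_cons_cons_eq_zero (hB : ∀ t ∈ B, P s t = 0) (t u : S) (rest : List S) :
    untilWeight P B A s (t :: u :: rest) = 0 := by
  by_cases htB : t ∈ B
  · simp [untilWeight, hB t htB]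
  · by_cases htA : t ∈ A <;> simp [untilWeight, htA, htB]

lemma untilWeight_singleton (hsB : s ∈ B) (hsA : s ∉ A) (t : S) :
    untilWeight P B A s [t] = A.indicator (P s) t := by
  by_cases htA : t ∈ A <;> simp [untilWeight, hsA, hsB, htA]

lemma untilProb_eq_pmass (hsB : s ∈ B) (hsA : s ∉ A) (hB : ∀ t ∈ B, P s t = 0) :
    untilProb P B A s = pmass (P s) A := by
  have hsupp : Function.support (untilWeight P B A s) ⊆ Set.range fun t : S => [t] := by
    rintro (_ | ⟨t, _ | ⟨u, rest⟩⟩) hl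
    · simp [untilWeight, hsA] at hl
    · exact ⟨t, rfl⟩
    · exact absurd (untilWeight_cons_cons_eq_zero hB t u rest) hl
  rw [untilProb, ← List.singleton_injective.tsum_eq hsupp]
  simp only [untilWeight_singleton hsB hsA, pmass, tsum_subtype]

end NoInternalStep

section Equivalence

variable {L : Type*} {P : S → S → ℝ} {lab : S → L} {ε : ℝ} {R : S → S → Prop}

lemma IsBranchingEpsBisim.isTransEpsBisim (h0 : ∀ s u, R s u → P s u = 0)
    (h : IsBranchingEpsBisim P lab ε R) : IsTransEpsBisim P lab ε R := by
  obtain ⟨hR, hbr⟩ := h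
  refine ⟨hR, fun s t hst => ⟨(hbr s t hst).1, fun A hA => ?_⟩⟩
  have hCt : {u | R t u} = {u | R s u} :=
    Set.ext fun u => ⟨hR.trans hst, hR.trans (hR.symm hst)⟩
  have hsC : ∀ u ∈ {u | R s u}, P s u = 0 := h0 s
  have htC : ∀ u ∈ {u | R s u}, P t u = 0 := fun u hu => h0 t u (hR.trans (hR.symm hst) hu)
  have hAC : relImg R (A \ {u | R s u}) ⊆ A \ {u | R s u} := by
    rintro v ⟨u, ⟨huA, huC⟩, huv⟩
    exact ⟨hA ⟨u, huA, huv⟩, fun hv => huC (hR.trans hv (hR.symm huv))⟩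
  have key := (hbr s t hst).2 (A \ {u | R s u}) hAC
  rwa [hCt, untilProb_eq_pmass (B := {u | R s u}) (hR.refl s) (fun h => h.2 (hR.refl s)) hsC,
    untilProb_eq_pmass (B := {u | R s u}) hst (fun h => h.2 hst) htC,
    pmass_diff_of_eq_zero hsC, pmass_diff_of_eq_zero htC] at key

lemma IsTransEpsBisim.isBranchingEpsBisim (h0 : ∀ s u, R s u → P s u = 0)
    (h : IsTransEpsBisim P lab ε R) : IsBranchingEpsBisim P lab ε R := by
  obtain ⟨hR, htr⟩ := h
  refine ⟨hR, fun s t hst => ⟨(htr s t hst).1, fun A hA => ?_⟩⟩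
  by_cases hsA : s ∈ A
  · have hε : 0 ≤ ε := by simpa using (htr s s (hR.refl s)).2 Set.univ (Set.subset_univ _)
    rw [untilProb_of_mem P _ hsA, untilProb_of_mem P _ (hA ⟨s, hsA, hst⟩)]
    simpa using hε
  · have htA : t ∉ A := fun htA => hsA (hA ⟨t, htA, hR.symm hst⟩)
    rw [untilProb_eq_pmass (B := {u | R s u}) (hR.refl s) hsA (h0 s),
      untilProb_eq_pmass (B := {u | R t u}) (hR.refl t) htA (h0 t)]
    exact (htr s t hst).2 A hA

end Equivalence

end

theorem noStutter_branching_eq_transEpsBisim_general {S L : Type*}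
    (P : S → S → ℝ) (lab : S → L)
    (hP : ∀ s, IsDistr (P s))
    (ε : ℝ)
    (hns : ∀ s, pmass (P s) {u | lab u = lab s} = 0) :
    (∀ R : S → S → Prop, IsBranchingEpsBisim P lab ε R ↔ IsTransEpsBisim P lab ε R) ∧
    (∀ s t : S, (∃ R, IsBranchingEpsBisim P lab ε R ∧ R s t) ↔
        (∃ R, IsTransEpsBisim P lab ε R ∧ R s t)) := by
  have hstep : ∀ s u, lab u = lab s → P s u = 0 := fun s _ hu =>
    eq_zero_of_pmass_eq_zero (hP s).1 (hP s).2.2.summable (hns s) hu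
  have hiff : ∀ R, IsBranchingEpsBisim P lab ε R ↔ IsTransEpsBisim P lab ε R := fun R =>
    ⟨fun h => h.isTransEpsBisim fun s u hsu => hstep s u ((h.2 s u hsu).1.symm),
      fun h => h.isBranchingEpsBisim fun s u hsu => hstep s u ((h.2 s u hsu).1.symm)⟩
  exact ⟨hiff, fun s t => exists_congr fun R => and_congr_left' (hiff R)⟩

theorem noStutter_branching_eq_transEpsBisim {S L : Type*} [Countable S] [Nonempty S]
    (P : S → S → ℝ) (lab : S → L)
    (hP : ∀ s, IsDistr (P s)) (hfb : ∀ s, (Function.support (P s)).Finite)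
    (ε : ℝ)
    (hns : ∀ s, pmass (P s) {u | lab u = lab s} = 0) :
    (∀ R : S → S → Prop, IsBranchingEpsBisim P lab ε R ↔ IsTransEpsBisim P lab ε R) ∧
    (∀ s t : S, (∃ R, IsBranchingEpsBisim P lab ε R ∧ R s t) ↔
        (∃ R, IsTransEpsBisim P lab ε R ∧ R s t)) :=
  noStutter_branching_eq_transEpsBisim_general P lab hP ε hns
end

section
/- If two finite LMCs M and N are ε-perturbed bisimilar (M ≃_ε N, i.e., there exist ε-perturbations M' of M and N' of N with M' ∼ N'), then M ∼^*_ε N: the bisimilarity relation ∼' of M' ⊕ N' is a transitive ε-bisimulation on M ⊕ N relating the initial states. -/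
open scoped BigOperators

attribute [local instance] Classical.propDecidable

/-!
A set closed under the bisimilarity `R` of the perturbed chain is a union of `R`-classes, so
`P'` assigns it equal mass at related states. Since every distribution moved by at most `ε` in
L1-distance changes the mass of any set by at most `ε / 2`, the masses under `P` at related states
differ by at most `ε`.
-/

open Finset

section Finite

variable {S : Type*} [Fintype S]

lemma pmass_eq_sum_filter (μ : S → ℝ) (A : Set S) : pmass μ A = ∑ a with a ∈ A, μ a := by
  rw [pmass, _root_.tsum_subtype, tsum_fintype, sum_filter]
  simp only [Set.indicator_apply]

lemma IsDistr.sum_eq_one {μ : S → ℝ} (h : IsDistr μ) : ∑ s, μ s = 1 := by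
  simpa using h.2.2.tsum_eq

lemma l1dist_eq_sum (μ ν : S → ℝ) : l1dist μ ν = ∑ s, |μ s - ν s| := tsum_fintype _

/-- With equal total masses, the excess of `μ` over `ν` on `A` is their deficit on `Aᶜ`, and
each is bounded by the L1-distance restricted to that part. -/
lemma abs_pmass_sub_le_half_l1dist {μ ν : S → ℝ} (hsum : ∑ s, μ s = ∑ s, ν s) (A : Set S) :
    |pmass μ A - pmass ν A| ≤ l1dist μ ν / 2 := by
  set d : S → ℝ := fun s => μ s - ν s
  have hin : pmass μ A - pmass ν A = ∑ a with a ∈ A, d a := by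
    rw [pmass_eq_sum_filter, pmass_eq_sum_filter, ← sum_sub_distrib]
  have hout : pmass μ A - pmass ν A = -∑ a with a ∉ A, d a := by
    have htotal : ∑ s, d s = 0 := by rw [sum_sub_distrib, hsum, sub_self]
    rw [hin, eq_neg_iff_add_eq_zero, sum_filter_add_sum_filter_not, htotal]
  have hl1 : l1dist μ ν = ∑ a with a ∈ A, |d a| + ∑ a with a ∉ A, |d a| := by
    rw [l1dist_eq_sum, sum_filter_add_sum_filter_not]
  have h₁ : |pmass μ A - pmass ν A| ≤ ∑ a with a ∈ A, |d a| :=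
    hin ▸ abs_sum_le_sum_abs _ _
  have h₂ : |pmass μ A - pmass ν A| ≤ ∑ a with a ∉ A, |d a| := by
    rw [hout, abs_neg]
    exact abs_sum_le_sum_abs _ _
  linarith

lemma pmass_preimage_eq_of_fibers {Q : Type*} {μ ν : S → ℝ} (f : S → Q)
    (hfib : ∀ q, pmass μ (f ⁻¹' {q}) = pmass ν (f ⁻¹' {q})) (B : Set Q) :
    pmass μ (f ⁻¹' B) = pmass ν (f ⁻¹' B) := by
  set T : Finset Q := (univ.filter fun x => f x ∈ B).image f
  have hT : ∀ x, f x ∈ T ↔ f x ∈ B := fun x => by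
    simp only [T, mem_image, mem_filter, mem_univ, true_and]
    exact ⟨fun ⟨a, ha, hax⟩ => hax ▸ ha, fun hx => ⟨x, hx, rfl⟩⟩
  simp only [pmass_eq_sum_filter, Set.mem_preimage, Set.mem_singleton_iff] at hfib ⊢
  simp only [← hT, ← sum_fiberwise_eq_sum_filter, hfib]

lemma pmass_eq_of_relImg_subset {R : S → S → Prop} (hR : Equivalence R) {μ ν : S → ℝ}
    (hcls : ∀ c, pmass μ {u | R c u} = pmass ν {u | R c u}) {A : Set S}
    (hA : relImg R A ⊆ A) : pmass μ A = pmass ν A := by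
  let σ : Setoid S := ⟨R, hR⟩
  have hfib : ∀ c, (Quotient.mk σ) ⁻¹' {Quotient.mk σ c} = {u | R c u} := fun c => by
    ext u
    simp only [Set.mem_preimage, Set.mem_singleton_iff, Quotient.eq]
    exact ⟨hR.symm, hR.symm⟩
  have hsat : (Quotient.mk σ) ⁻¹' (Quotient.mk σ '' A) = A := by
    ext u
    simp only [Set.mem_preimage, Set.mem_image, Quotient.eq]
    exact ⟨fun ⟨a, ha, hau⟩ => hA ⟨a, ha, hau⟩, fun hu => ⟨u, hu, hR.refl u⟩⟩
  rw [← hsat]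
  refine pmass_preimage_eq_of_fibers _ (fun q => ?_) _
  induction q using Quotient.ind with
  | _ c => rw [hfib, hcls]

end Finite

theorem perturbed_bisim_implies_transEpsBisim_general {S L : Type*} [Fintype S]
    (P P' : S → S → ℝ) (lab : S → L)
    (hP : ∀ s, IsDistr (P s)) (hP' : ∀ s, IsDistr (P' s))
    (ε : ℝ) (hpert : ∀ s, l1dist (P s) (P' s) ≤ ε)
    (R : S → S → Prop) (hR : IsExactBisim P' lab R)
    (s0 t0 : S) (h0 : R s0 t0) :
    IsTransEpsBisim P lab ε R ∧ R s0 t0 := by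
  obtain ⟨hEquiv, hExact⟩ := hR
  refine ⟨⟨hEquiv, fun s t hst => ⟨(hExact s t hst).1, fun A hA => ?_⟩⟩, h0⟩
  have hclose : ∀ u, |pmass (P u) A - pmass (P' u) A| ≤ ε / 2 := fun u =>
    (abs_pmass_sub_le_half_l1dist ((hP u).sum_eq_one.trans (hP' u).sum_eq_one.symm) A).trans
      (by linarith [hpert u])
  have hexact : pmass (P' s) A = pmass (P' t) A :=
    pmass_eq_of_relImg_subset hEquiv (hExact s t hst).2 hA
  calc |pmass (P s) A - pmass (P t) A|
      ≤ |pmass (P s) A - pmass (P' s) A| + |pmass (P' t) A - pmass (P t) A| := by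
        rw [← hexact]
        exact abs_sub_le _ _ _
    _ ≤ ε / 2 + ε / 2 := add_le_add (hclose s) (by rw [abs_sub_comm]; exact hclose t)
    _ = ε := add_halves ε

theorem perturbed_bisim_implies_transEpsBisim {S L : Type*} [Fintype S] [Nonempty S]
    (P P' : S → S → ℝ) (lab : S → L)
    (hP : ∀ s, IsDistr (P s)) (hP' : ∀ s, IsDistr (P' s))
    (ε : ℝ) (hpert : ∀ s, l1dist (P s) (P' s) ≤ ε)
    (R : S → S → Prop) (hR : IsExactBisim P' lab R)
    (s0 t0 : S) (h0 : R s0 t0) :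
    IsTransEpsBisim P lab ε R ∧ R s0 t0 :=
  perturbed_bisim_implies_transEpsBisim_general P P' lab hP hP' ε hpert R hR s0 t0 h0
end

section
/- Let s ∼_ε t in a finitely branching LMC in which some states are labeled g and exactly the states that cannot reach a g-labeled state are labeled f. Then for all k ∈ ℕ: |Pr_s(◇^{≤k} g) − Pr_t(◇^{≤k} g)| ≤ ε · Σ_{i=1}^{k} Pr_s(N ≥ i), where N is the random variable counting the number of steps until a g- or f-labeled state is reached. Consequently |Pr_s(◇ g) − Pr_t(◇ g)| ≤ ε · 𝔼_s(N). -/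
open scoped BigOperators

attribute [local instance] Classical.propDecidable

/-!
By induction on `k`, related states `s ∼ t` satisfy
`|Pr_s(◇^{≤k} g) - Pr_t(◇^{≤k} g)| ≤ ε · 𝔼_s[min(N, k)]`. At `g`- and `f`-states both
probabilities are constantly `1` resp. `0`. Elsewhere, the layer-cake formula
`∑ p(u) h(u) = ∫₀¹ p{h > x} dx` turns the defining inequality `P(s)(A) ≤ P(t)(R(A)) + ε` into
`𝔼_s h ≤ 𝔼_t min(h + c, 1) + ε` whenever `h u ≤ h v + c v` for `u R v`. Applied to `h = r_k` and
`h = 1 - r_k` with `c = ε · 𝔼[min(N, k)]` (the induction hypothesis), the extra `ε` is absorbed by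
`𝔼_s[min(N, k + 1)] = 1 + ∑ P(s)(u) 𝔼_u[min(N, k)]`. The unbounded bound follows by letting
`k → ∞`, since `𝔼_s[min(N, k)] ≤ 𝔼_s N` and the bounded reachability probabilities converge to
the unbounded one.
-/

open Filter Topology

section LayerCake

variable {S : Type*}

lemma pmass_eq_sum_indicator {p : S → ℝ} {F : Finset S} (hF : Function.support p ⊆ F)
    (A : Set S) : pmass p A = ∑ u ∈ F, A.indicator p u := by
  rw [pmass, tsum_subtype]
  refine tsum_eq_sum fun u hu => Set.indicator_apply_eq_zero.2 fun _ => ?_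
  exact Function.notMem_support.1 fun h => hu (hF h)

lemma pmass_mono_s17 {q : S → ℝ} (hq : 0 ≤ q) (hfq : (Function.support q).Finite)
    {A B : Set S} (hAB : A ⊆ B) : pmass q A ≤ pmass q B := by
  rw [pmass_eq_sum_indicator hfq.coe_toFinset.ge, pmass_eq_sum_indicator hfq.coe_toFinset.ge]
  exact Finset.sum_le_sum fun u _ => Set.indicator_le_indicator_of_subset hAB hq u

lemma intervalIntegral_indicator_Iio_const (a : ℝ) {c : ℝ} (hc₀ : 0 ≤ c) (hc₁ : c ≤ 1) :
    ∫ x in (0 : ℝ)..1, (Set.Iio c).indicator (fun _ => a) x = c * a := by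
  rw [intervalIntegral.integral_of_le zero_le_one,
    MeasureTheory.integral_indicator_const _ measurableSet_Iio,
    MeasureTheory.measureReal_restrict_apply measurableSet_Iio]
  have hIoo : Set.Iio c ∩ Set.Ioc 0 1 = Set.Ioo 0 c := by
    ext x
    simp only [Set.mem_inter_iff, Set.mem_Iio, Set.mem_Ioc, Set.mem_Ioo]
    grind
  rw [hIoo, Real.volume_real_Ioo_of_le hc₀, smul_eq_mul, sub_zero]

lemma intervalIntegrable_indicator_Iio_const (a c : ℝ) :
    IntervalIntegrable ((Set.Iio c).indicator fun _ => a) MeasureTheory.volume 0 1 :=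
  (intervalIntegrable_iff_integrableOn_Ioc_of_le zero_le_one).2 <|
    (MeasureTheory.integrableOn_const measure_Ioc_lt_top.ne).indicator measurableSet_Iio

lemma pmass_lt_eq_sum_indicator {p : S → ℝ} {F : Finset S} (hF : Function.support p ⊆ F)
    (h : S → ℝ) (x : ℝ) :
    pmass p {u | x < h u} = ∑ u ∈ F, (Set.Iio (h u)).indicator (fun _ => p u) x := by
  rw [pmass_eq_sum_indicator hF]
  exact Finset.sum_congr rfl fun u _ => by simp [Set.indicator_apply]

lemma intervalIntegrable_pmass_lt {p : S → ℝ} (hfp : (Function.support p).Finite) (h : S → ℝ) :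
    IntervalIntegrable (fun x => pmass p {u | x < h u}) MeasureTheory.volume 0 1 := by
  simp_rw [pmass_lt_eq_sum_indicator hfp.coe_toFinset.ge, ← Finset.sum_apply]
  exact IntervalIntegrable.sum _ fun u _ => intervalIntegrable_indicator_Iio_const _ _

lemma tsum_mul_eq_integral_pmass_lt {p : S → ℝ} (hfp : (Function.support p).Finite)
    {h : S → ℝ} (h₀ : 0 ≤ h) (h₁ : h ≤ 1) :
    ∑' u, p u * h u = ∫ x in (0 : ℝ)..1, pmass p {u | x < h u} := by
  have hF := hfp.coe_toFinset.ge
  simp_rw [pmass_lt_eq_sum_indicator hF]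
  rw [intervalIntegral.integral_finsetSum fun u _ => intervalIntegrable_indicator_Iio_const _ _]
  refine (tsum_eq_sum fun u hu => ?_).trans (Finset.sum_congr rfl fun u _ => ?_)
  · rw [Function.notMem_support.1 fun h => hu (hF h), zero_mul]
  · rw [intervalIntegral_indicator_Iio_const _ (h₀ u) (h₁ u), mul_comm]

end LayerCake

section Transfer

variable {S : Type*}

lemma summable_mul_of_support_finite {p : S → ℝ} (hfp : (Function.support p).Finite)
    (h : S → ℝ) : Summable fun u => p u * h u :=
  summable_of_hasFiniteSupport (hfp.subset (Function.support_mul_subset_left p h))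

lemma tsum_mul_le_tsum_mul_add_of_pmass_le {p q : S → ℝ} (hfp : (Function.support p).Finite)
    (hfq : (Function.support q).Finite) (hq : 0 ≤ q) {R : S → S → Prop} {ε : ℝ}
    (hpq : ∀ A, pmass p A ≤ pmass q (relImg R A) + ε) {h k : S → ℝ} (h₀ : 0 ≤ h) (h₁ : h ≤ 1)
    (k₀ : 0 ≤ k) (k₁ : k ≤ 1) (hhk : ∀ u v, R u v → h u ≤ k v) :
    ∑' u, p u * h u ≤ ∑' v, q v * k v + ε := by
  have hlevel (x : ℝ) : pmass p {u | x < h u} ≤ pmass q {v | x < k v} + ε := by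
    have hsub : relImg R {u | x < h u} ⊆ {v | x < k v} := by
      rintro v ⟨u, hu, huv⟩
      exact lt_of_lt_of_le hu (hhk u v huv)
    linarith [hpq {u | x < h u}, pmass_mono_s17 hq hfq hsub]
  rw [tsum_mul_eq_integral_pmass_lt hfp h₀ h₁, tsum_mul_eq_integral_pmass_lt hfq k₀ k₁]
  calc ∫ x in (0 : ℝ)..1, pmass p {u | x < h u}
      ≤ ∫ x in (0 : ℝ)..1, (pmass q {v | x < k v} + ε) :=
        intervalIntegral.integral_mono_on zero_le_one (intervalIntegrable_pmass_lt hfp h)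
          ((intervalIntegrable_pmass_lt hfq k).add intervalIntegrable_const) fun x _ => hlevel x
    _ = (∫ x in (0 : ℝ)..1, pmass q {v | x < k v}) + ε := by
        rw [intervalIntegral.integral_add (intervalIntegrable_pmass_lt hfq k)
          intervalIntegrable_const, intervalIntegral.integral_const, sub_zero, one_smul]

lemma tsum_mul_le_of_isEpsBisim {L : Type*} {P : S → S → ℝ} {lab : S → L} {ε : ℝ}
    {R : S → S → Prop} (hP : ∀ s, IsDistr (P s)) (hfb : ∀ s, (Function.support (P s)).Finite)
    (hR : IsEpsBisim P lab ε R) {s t : S} (hst : R s t) {h c : S → ℝ} (h₀ : 0 ≤ h) (h₁ : h ≤ 1)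
    (hc : 0 ≤ c) (hhc : ∀ u v, R u v → h u ≤ h v + c v) :
    ∑' u, P s u * h u ≤ ∑' v, P t v * h v + ∑' v, P t v * c v + ε := by
  have hcap := tsum_mul_le_tsum_mul_add_of_pmass_le (hfb s) (hfb t) (hP t).1 (hR.2.2 s t hst).2
    h₀ h₁ (k := fun v => min (h v + c v) 1) (fun v => le_min (add_nonneg (h₀ v) (hc v)) zero_le_one)
    (fun v => min_le_right _ _) fun u v huv => le_min (hhc u v huv) (h₁ u)
  have hdrop : ∑' v, P t v * min (h v + c v) 1 ≤ ∑' v, P t v * (h v + c v) :=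
    Summable.tsum_le_tsum (fun v => mul_le_mul_of_nonneg_left (min_le_left _ _) ((hP t).1 v))
      (summable_mul_of_support_finite (hfb t) _) (summable_mul_of_support_finite (hfb t) _)
  simp_rw [mul_add] at hdrop
  rw [Summable.tsum_add (summable_mul_of_support_finite (hfb t) _)
    (summable_mul_of_support_finite (hfb t) _)] at hdrop
  linarith

end Transfer

section Reach

variable {S : Type*} {P : S → S → ℝ} {G : Set S}

lemma reachLe_of_mem {s : S} (hs : s ∈ G) (k : ℕ) : reachLe P G k s = 1 := by
  cases k <;> simp [reachLe, hs]

lemma reachLe_succ_of_notMem {s : S} (hs : s ∉ G) (k : ℕ) :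
    reachLe P G (k + 1) s = ∑' t, P s t * reachLe P G k t := by
  simp [reachLe, hs]

lemma reachLe_nonneg (hP : ∀ s, IsDistr (P s)) (k : ℕ) (s : S) : 0 ≤ reachLe P G k s := by
  induction k generalizing s with
  | zero => unfold reachLe; split_ifs <;> norm_num
  | succ k ih =>
    by_cases hs : s ∈ G
    · rw [reachLe_of_mem hs]; exact zero_le_one
    · rw [reachLe_succ_of_notMem hs]
      exact tsum_nonneg fun t => mul_nonneg ((hP s).1 t) (ih t)

lemma reachLe_le_one (hP : ∀ s, IsDistr (P s)) (hfb : ∀ s, (Function.support (P s)).Finite)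
    (k : ℕ) (s : S) : reachLe P G k s ≤ 1 := by
  induction k generalizing s with
  | zero => unfold reachLe; split_ifs <;> norm_num
  | succ k ih =>
    by_cases hs : s ∈ G
    · rw [reachLe_of_mem hs]
    · rw [reachLe_succ_of_notMem hs, ← (hP s).2.2.tsum_eq]
      exact Summable.tsum_le_tsum (fun t => mul_le_of_le_one_right ((hP s).1 t) (ih t))
        (summable_mul_of_support_finite (hfb s) _) (hP s).2.2.summable

lemma reachLe_eq_zero_of_not_reach {s : S}
    (hs : ¬ ∃ u, Relation.ReflTransGen (fun a b => P a b ≠ 0) s u ∧ u ∈ G) (k : ℕ) :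
    reachLe P G k s = 0 := by
  have hsG : s ∉ G := fun h => hs ⟨s, .refl, h⟩
  induction k generalizing s with
  | zero => simp [reachLe, hsG]
  | succ k ih =>
    rw [reachLe_succ_of_notMem hsG]
    refine (tsum_congr fun t => ?_).trans tsum_zero
    by_cases hst : P s t = 0
    · rw [hst, zero_mul]
    · have ht : ¬ ∃ u, Relation.ReflTransGen (fun a b => P a b ≠ 0) t u ∧ u ∈ G :=
        fun ⟨u, htu, hu⟩ => hs ⟨u, .head hst htu, hu⟩
      rw [ih ht fun h => ht ⟨t, .refl, h⟩, mul_zero]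

lemma one_sub_reachLe_succ_of_notMem (hP : ∀ s, IsDistr (P s))
    (hfb : ∀ s, (Function.support (P s)).Finite) {s : S} (hs : s ∉ G) (k : ℕ) :
    1 - reachLe P G (k + 1) s = ∑' u, P s u * (1 - reachLe P G k u) := by
  simp_rw [mul_one_sub]
  rw [Summable.tsum_sub (hP s).2.2.summable (summable_mul_of_support_finite (hfb s) _),
    (hP s).2.2.tsum_eq, reachLe_succ_of_notMem hs]

/-- `𝔼_s[min(N, k)] = ∑_{i=1}^k Pr_s(N ≥ i)`, where `N` counts the steps until `T` is reached. -/
noncomputable def expectedHitTimeMin (P : S → S → ℝ) (T : Set S) (k : ℕ) (s : S) : ℝ :=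
  ∑ j ∈ Finset.range k, (1 - reachLe P T j s)

lemma expectedHitTimeMin_nonneg (hP : ∀ s, IsDistr (P s))
    (hfb : ∀ s, (Function.support (P s)).Finite) (T : Set S) (k : ℕ) (s : S) :
    0 ≤ expectedHitTimeMin P T k s :=
  Finset.sum_nonneg fun j _ => sub_nonneg.2 (reachLe_le_one hP hfb j s)

lemma expectedHitTimeMin_succ_of_notMem (hP : ∀ s, IsDistr (P s))
    (hfb : ∀ s, (Function.support (P s)).Finite) {T : Set S} {s : S} (hs : s ∉ T) (k : ℕ) :
    expectedHitTimeMin P T (k + 1) s = 1 + ∑' u, P s u * expectedHitTimeMin P T k u := by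
  simp_rw [expectedHitTimeMin, Finset.sum_range_succ', one_sub_reachLe_succ_of_notMem hP hfb hs,
    Finset.mul_sum]
  rw [Summable.tsum_finsetSum fun j _ => summable_mul_of_support_finite (hfb s) _]
  simp [reachLe, hs, add_comm]

end Reach

section Bisimilar

variable {S L : Type*} {P : S → S → ℝ} {lab : S → L} {ε : ℝ} {R : S → S → Prop}

lemma reachLe_eq_of_lab_eq_of_absorbing {g f : L} (hf : ∀ s, lab s = f →
      ¬ ∃ u, Relation.ReflTransGen (fun a b => P a b ≠ 0) s u ∧ lab u = g) {s t : S}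
    (hl : lab s = lab t) (hs : lab s = g ∨ lab s = f) (k : ℕ) :
    reachLe P {u | lab u = g} k s = reachLe P {u | lab u = g} k t := by
  rcases hs with hsg | hsf
  · rw [reachLe_of_mem (G := {u | lab u = g}) hsg,
      reachLe_of_mem (G := {u | lab u = g}) (show lab t = g from hl ▸ hsg)]
  · rw [reachLe_eq_zero_of_not_reach (G := {u | lab u = g}) (hf s hsf),
      reachLe_eq_zero_of_not_reach (G := {u | lab u = g}) (hf t (hl ▸ hsf))]

theorem abs_reachLe_sub_le_mul_expectedHitTimeMin (hP : ∀ s, IsDistr (P s))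
    (hfb : ∀ s, (Function.support (P s)).Finite) (hε : 0 ≤ ε) (hR : IsEpsBisim P lab ε R)
    {g f : L} (hf : ∀ s, lab s = f →
      ¬ ∃ u, Relation.ReflTransGen (fun a b => P a b ≠ 0) s u ∧ lab u = g) (k : ℕ) :
    ∀ s t, R s t → |reachLe P {u | lab u = g} k s - reachLe P {u | lab u = g} k t| ≤
      ε * expectedHitTimeMin P {u | lab u = g ∨ lab u = f} k s := by
  set G := {u | lab u = g}
  set T := {u | lab u = g ∨ lab u = f}
  induction k with
  | zero =>
    intro s t hst
    have hl := (hR.2.2 s t hst).1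
    simp [reachLe, expectedHitTimeMin, G, hl]
  | succ k ih =>
    intro s t hst
    have hl := (hR.2.2 s t hst).1
    by_cases hsT : s ∈ T
    · rw [reachLe_eq_of_lab_eq_of_absorbing hf hl hsT, sub_self, abs_zero]
      exact mul_nonneg hε (expectedHitTimeMin_nonneg hP hfb T _ s)
    have htT : t ∉ T := fun h => hsT (show lab s = g ∨ lab s = f from hl ▸ h)
    have hsG : s ∉ G := fun h => hsT (Or.inl h)
    have htG : t ∉ G := fun h => htT (Or.inl h)
    set r := reachLe P G k
    set c := fun u => ε * expectedHitTimeMin P T k u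
    have hc : 0 ≤ c := fun u => mul_nonneg hε (expectedHitTimeMin_nonneg hP hfb T k u)
    have hr₀ : 0 ≤ r := reachLe_nonneg hP k
    have hr₁ : r ≤ 1 := reachLe_le_one hP hfb k
    have hup := tsum_mul_le_of_isEpsBisim hP hfb hR (hR.2.1 hst) hr₀ hr₁ hc fun u v huv =>
      by linarith [abs_le.1 (ih v u (hR.2.1 huv))]
    have hdown := tsum_mul_le_of_isEpsBisim hP hfb hR (hR.2.1 hst) (h := 1 - r)
      (fun u => sub_nonneg.2 (hr₁ u)) (fun u => sub_le_self 1 (hr₀ u)) hc fun u v huv =>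
      by simp only [Pi.sub_apply, Pi.one_apply]; linarith [abs_le.1 (ih v u (hR.2.1 huv))]
    have hcs : ∑' u, P s u * c u = ε * (expectedHitTimeMin P T (k + 1) s - 1) := by
      simp_rw [c, mul_left_comm _ ε]
      rw [Summable.tsum_mul_left _ (summable_mul_of_support_finite (hfb s) _),
        expectedHitTimeMin_succ_of_notMem hP hfb hsT, add_sub_cancel_left]
    simp only [Pi.sub_apply, Pi.one_apply] at hdown
    rw [← reachLe_succ_of_notMem hsG, ← reachLe_succ_of_notMem htG, hcs] at hup
    rw [← one_sub_reachLe_succ_of_notMem hP hfb hsG, ← one_sub_reachLe_succ_of_notMem hP hfb htG,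
      hcs] at hdown
    rw [abs_le]
    constructor <;> linarith

end Bisimilar

section Until

variable {S : Type*} {P : S → S → ℝ} {G : Set S}

lemma untilWeight_univ_nonneg (hP : ∀ s, IsDistr (P s)) (l : List S) (s : S) :
    0 ≤ untilWeight P Set.univ G s l := by
  induction l generalizing s with
  | nil => unfold untilWeight; split_ifs <;> norm_num
  | cons t l ih =>
    unfold untilWeight; split_ifs
    exacts [le_rfl, mul_nonneg ((hP s).1 t) (ih t), le_rfl]

lemma hasSum_untilWeight_length_le (hP : ∀ s, IsDistr (P s))
    (hfb : ∀ s, (Function.support (P s)).Finite) (k : ℕ) (s : S) :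
    HasSum (fun l => if l.length ≤ k then untilWeight P Set.univ G s l else 0)
      (reachLe P G k s) := by
  induction k generalizing s with
  | zero =>
    convert hasSum_ite_eq [] (reachLe P G 0 s) using 1
    ext l; cases l <;> simp [untilWeight, reachLe]
  | succ k ih =>
    by_cases hs : s ∈ G
    · rw [reachLe_of_mem hs]
      convert hasSum_ite_eq [] (1 : ℝ) using 1
      ext l; cases l <;> simp [untilWeight, hs]
    set w : S × List S → ℝ :=
      fun p => P s p.1 * if p.2.length ≤ k then untilWeight P Set.univ G p.1 p.2 else 0
    have hw : 0 ≤ w := fun p => mul_nonneg ((hP s).1 p.1)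
      (by split_ifs; exacts [untilWeight_univ_nonneg hP _ _, le_rfl])
    have hfiber (t : S) : HasSum (fun l => w (t, l)) (P s t * reachLe P G k t) :=
      (ih t).mul_left (P s t)
    have hsum : Summable w := (summable_prod_of_nonneg hw).2
      ⟨fun t => (hfiber t).summable, by
        simpa only [(hfiber _).tsum_eq] using summable_mul_of_support_finite (hfb s) _⟩
    have hcons : Function.Injective fun p : S × List S => p.1 :: p.2 :=
      fun p q hpq => Prod.ext (List.cons.inj hpq).1 (List.cons.inj hpq).2
    rw [reachLe_succ_of_notMem hs, ← hcons.hasSum_iff]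
    · convert hsum.hasSum using 1
      · ext p; simp [w, untilWeight, hs]
      · rw [hsum.tsum_prod' fun t => (hfiber t).summable]
        exact tsum_congr fun t => (hfiber t).tsum_eq.symm
    · rintro (_ | ⟨t, l⟩) hl
      · simp [untilWeight, hs]
      · exact absurd ⟨(t, l), rfl⟩ hl

lemma summable_untilWeight_univ (hP : ∀ s, IsDistr (P s))
    (hfb : ∀ s, (Function.support (P s)).Finite) (s : S) :
    Summable (untilWeight P Set.univ G s) := by
  refine summable_of_sum_le (c := 1) (fun l => untilWeight_univ_nonneg hP l s) fun u => ?_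
  set K := u.sup List.length
  calc ∑ l ∈ u, untilWeight P Set.univ G s l
      = ∑ l ∈ u, if l.length ≤ K then untilWeight P Set.univ G s l else 0 :=
        Finset.sum_congr rfl fun l hl => (if_pos (Finset.le_sup hl)).symm
    _ ≤ reachLe P G K s := sum_le_hasSum u (fun l _ => by
        split_ifs; exacts [untilWeight_univ_nonneg hP l s, le_rfl])
        (hasSum_untilWeight_length_le hP hfb K s)
    _ ≤ 1 := reachLe_le_one hP hfb K s

lemma tendsto_reachLe_untilProb (hP : ∀ s, IsDistr (P s))
    (hfb : ∀ s, (Function.support (P s)).Finite) (s : S) :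
    Tendsto (fun k => reachLe P G k s) atTop (𝓝 (untilProb P Set.univ G s)) := by
  have hlim := tendsto_tsum_of_dominated_convergence (𝓕 := atTop)
    (f := fun k l => if l.length ≤ k then untilWeight P Set.univ G s l else 0)
    (summable_untilWeight_univ hP hfb s)
    (fun l => tendsto_const_nhds.congr' <|
      eventually_atTop.2 ⟨l.length, fun k hk => (if_pos hk).symm⟩)
    (Eventually.of_forall fun k l => by
      split_ifs
      · rw [Real.norm_of_nonneg (untilWeight_univ_nonneg hP l s)]
      · rw [norm_zero]; exact untilWeight_univ_nonneg hP l s)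
  simpa only [(hasSum_untilWeight_length_le hP hfb _ s).tsum_eq, untilProb] using hlim

end Until

theorem unbounded_reach_bound_general {S L : Type*}
    (P : S → S → ℝ) (lab : S → L)
    (hP : ∀ s, IsDistr (P s)) (hfb : ∀ s, (Function.support (P s)).Finite)
    (ε : ℝ) (hε : 0 ≤ ε) (g f : L)
    (hf : ∀ s, lab s = f ↔
      ¬ ∃ u, Relation.ReflTransGen (fun a b => P a b ≠ 0) s u ∧ lab u = g)
    (s t : S) (hst : ∃ R, IsEpsBisim P lab ε R ∧ R s t) :
    (∀ k : ℕ,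
      |reachLe P {u | lab u = g} k s - reachLe P {u | lab u = g} k t| ≤
        ε * ∑ j ∈ Finset.range k, (1 - reachLe P {u | lab u = g ∨ lab u = f} j s)) ∧
    (∀ E : ℝ,
      HasSum (fun j : ℕ => 1 - reachLe P {u | lab u = g ∨ lab u = f} j s) E →
      |untilProb P Set.univ {u | lab u = g} s -
        untilProb P Set.univ {u | lab u = g} t| ≤ ε * E) := by
  obtain ⟨R, hR, hst⟩ := hst
  have hbounded (k : ℕ) := abs_reachLe_sub_le_mul_expectedHitTimeMin hP hfb hε hR
    (fun u => (hf u).1) k s t hst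
  refine ⟨hbounded, fun E hE => ?_⟩
  have htrunc (k : ℕ) : expectedHitTimeMin P {u | lab u = g ∨ lab u = f} k s ≤ E :=
    sum_le_hasSum _ (fun j _ => sub_nonneg.2 (reachLe_le_one hP hfb j s)) hE
  exact le_of_tendsto
    ((tendsto_reachLe_untilProb hP hfb s).sub (tendsto_reachLe_untilProb hP hfb t)).abs
    (Eventually.of_forall fun k => (hbounded k).trans (mul_le_mul_of_nonneg_left (htrunc k) hε))

theorem unbounded_reach_bound {S L : Type*} [Countable S] [Nonempty S]
    (P : S → S → ℝ) (lab : S → L)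
    (hP : ∀ s, IsDistr (P s)) (hfb : ∀ s, (Function.support (P s)).Finite)
    (ε : ℝ) (hε : 0 ≤ ε) (g f : L) (hgf : g ≠ f)
    (hg : ∃ s, lab s = g)
    (hf : ∀ s, lab s = f ↔
      ¬ ∃ u, Relation.ReflTransGen (fun a b => P a b ≠ 0) s u ∧ lab u = g)
    (s t : S) (hst : ∃ R, IsEpsBisim P lab ε R ∧ R s t) :
    (∀ k : ℕ,
      |reachLe P {u | lab u = g} k s - reachLe P {u | lab u = g} k t| ≤
        ε * ∑ j ∈ Finset.range k, (1 - reachLe P {u | lab u = g ∨ lab u = f} j s)) ∧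
    (∀ E : ℝ,
      HasSum (fun j : ℕ => 1 - reachLe P {u | lab u = g ∨ lab u = f} j s) E →
      |untilProb P Set.univ {u | lab u = g} s -
        untilProb P Set.univ {u | lab u = g} t| ≤ ε * E) :=
  unbounded_reach_bound_general P lab hP hfb ε hε g f hf s t hst
end
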